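/- In the hardness-reduction game, within any single phase of n rounds, the maximum total payoff any defender strategy can achieve is 1; in particular any two rewards of +1 in the same phase must be separated by a penalty of −1. -/

import Mathlib

/-- States of the hardness-reduction game: the last `m` outcomes `Õ` together
with the flag `Ô` recording whether a reward was just received. -/
abbrev GState (m : ℕ) := (Fin m → Bool) × Bool

abbrev DefAct := Fin 3

abbrev AdvAct := Bool × Fin 4

/-- Transition of the hardness-reduction game. -/
def step {m : ℕ} (σ : GState m) (d : DefAct) (a : AdvAct) : GState m :=
  (fun j => if h : j.val = 0 then a.1 else σ.1 ⟨j.val - 1, by have := j.isLt; omega⟩,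
   decide (d = 2 ∨ d.val = a.2.val))

/-- Payoff of the hardness-reduction game: `−1` for playing `d ≠ 2` while
`Ô = 1` (unless the adversary plays the reset action `3`), `+1` for matching
the adversary's second component with `d ≠ 2` while `Ô = 0`, else `0`. -/
def pay {m : ℕ} (σ : GState m) (d : DefAct) (a : AdvAct) : ℝ :=
  if σ.2 = true ∧ d ≠ 2 ∧ a.2 ≠ 3 then -1
  else if d ≠ 2 ∧ d.val = a.2.val ∧ σ.2 = false then 1
  else 0

/-- State trajectory when the defender plays the action sequence `d`. -/
def statesSeq {m : ℕ} (d : ℕ → DefAct) (adv : ℕ → AdvAct) (σ0 : GState m) :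
    ℕ → GState m
  | 0 => σ0
  | t + 1 => step (statesSeq d adv σ0 t) (d t) (adv t)

/-! The flag `Ô`, read as `0` or `1`, is a potential for the payoff: outside reset rounds a
round pays at most the increase of the flag, since a `+1` sets the flag and leaving a set flag
other than by playing `2` costs `−1`. Summed over a phase this telescopes, so after the reset
round (which pays `0`) the total is at most the final flag, i.e. at most `1`. -/

namespace HardnessGame

variable {m : ℕ}

def flagValue (σ : GState m) : ℝ := if σ.2 then 1 else 0

lemma flagValue_nonneg (σ : GState m) : 0 ≤ flagValue σ := by
  unfold flagValue; split <;> norm_num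

lemma flagValue_le_one (σ : GState m) : flagValue σ ≤ 1 := by
  unfold flagValue; split <;> norm_num

lemma pay_of_reset (σ : GState m) (d : DefAct) {a : AdvAct} (ha : a.2 = 3) :
    pay σ d a = 0 := by
  have hd : d.val ≠ 3 := by omega
  simp [pay, ha, hd]

lemma pay_le_flagValue_step_sub (σ : GState m) (d : DefAct) {a : AdvAct}
    (ha : a.2 ≠ 3) : pay σ d a ≤ flagValue (step σ d a) - flagValue σ := by
  rcases σ with ⟨o, _ | _⟩ <;> by_cases hd : d = 2 <;> by_cases hm : d.val = a.2.val <;>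
    simp [pay, step, flagValue, ha, hd, hm]

lemma sum_Ico_pay_le (d : ℕ → DefAct) (a : ℕ → AdvAct) (σ0 : GState m) {k n : ℕ}
    (hkn : k ≤ n) (hnoreset : ∀ t ∈ Finset.Ico k n, (a t).2 ≠ 3) :
    ∑ t ∈ Finset.Ico k n, pay (statesSeq d a σ0 t) (d t) (a t)
      ≤ flagValue (statesSeq d a σ0 n) - flagValue (statesSeq d a σ0 k) := by
  rw [← Finset.sum_Ico_sub (fun t => flagValue (statesSeq d a σ0 t)) hkn]
  exact Finset.sum_le_sum fun t ht => pay_le_flagValue_step_sub _ _ (hnoreset t ht)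

end HardnessGame

open HardnessGame

/-- within a single phase of `n = 2^m` rounds — the adversary
plays the reset action `3` at the first round of the phase and never again
during the phase — the total payoff of **any** defender action sequence is at
most `1` (any two `+1` rewards in a phase are separated by a `−1` penalty). -/
theorem phase_payoff_le_one (m : ℕ) (d : ℕ → DefAct) (a : ℕ → AdvAct)
    (σ0 : GState m)
    (hreset : (a 0).2 = 3)
    (hnoreset : ∀ t, 1 ≤ t → t < 2 ^ m → (a t).2 ≠ 3) :
    ∑ t ∈ Finset.range (2 ^ m), pay (statesSeq d a σ0 t) (d t) (a t) ≤ 1 := by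
  rw [Finset.sum_range_eq_add_Ico _ (Nat.two_pow_pos m), pay_of_reset _ _ hreset, zero_add]
  have htail := sum_Ico_pay_le d a σ0 Nat.one_le_two_pow fun t ht =>
    hnoreset t (Finset.mem_Ico.1 ht).1 (Finset.mem_Ico.1 ht).2
  linarith [flagValue_le_one (statesSeq d a σ0 (2 ^ m)), flagValue_nonneg (statesSeq d a σ0 1)]
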